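/- arXiv:1711.07457 — 6 statements merged into one kernel-verified Lean document; each statement's English description precedes it below -/
import Mathlib

section
/- Let N ≥ 1, let n, m ∈ {1,…,N}, let s ∈ ℝ², and let c(i,j) ∈ ℝ² for i,j ∈ {1,…,N} be grid points such that for every p ∈ {1,…,N}: ‖c(p,i) − s‖ > ‖c(p,i+1) − s‖ for all i < n and ‖c(p,i) − s‖ < ‖c(p,i+1) − s‖ for all i ≥ n, and symmetrically for every q ∈ {1,…,N}: ‖c(i,q) − s‖ > ‖c(i+1,q) − s‖ for all i < m and ‖c(i,q) − s‖ < ‖c(i+1,q) − s‖ for all i ≥ m. Let h : ℝ → ℝ be strictly decreasing with h(‖c(i,j) − s‖) > 0 for all i,j, and define the N×N real matrix H by H_{ij} = h(‖c(i,j) − s‖). Then every unit eigenvector with nonnegative entries of HᵀH associated with the largest eigenvalue of HᵀH is unimodal with peak at index n, and every unit eigenvector with nonnegative entries of H Hᵀ associated with the largest eigenvalue of H Hᵀ is unimodal with peak at index m. -/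
open Matrix

/-- A vector `v ∈ ℝ^N` is unimodal with peak at index `n`:
`0 ≤ v_1 ≤ … ≤ v_n` and `v_n ≥ v_{n+1} ≥ … ≥ v_N ≥ 0`. -/
def UnimodalWithPeak {N : ℕ} (v : Fin N → ℝ) (n : Fin N) : Prop :=
  (∀ i : Fin N, 0 ≤ v i) ∧
  (∀ i j : Fin N, i ≤ j → j ≤ n → v i ≤ v j) ∧
  (∀ i j : Fin N, n ≤ i → i ≤ j → v j ≤ v i)

/-! Since `h` is strictly decreasing, the distance conditions say that every row of `H` is
unimodal with peak `n` and every column with peak `m`. Unimodal vectors with a fixed peak form a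
convex cone, so the columns `Σ_p H_{pk} H_p` of `HᵀH` are unimodal with peak `n`, and so is any
nonnegative eigenvector `v = μ⁻¹ (HᵀH) v`, the eigenvalue `μ` being positive because `HᵀH` has
positive entries. Applying this to `Hᵀ` gives the statement for `HHᵀ`. -/

section StepConditions

variable {β : Type*} [Preorder β] {N : ℕ} {n : Fin N} {g : Fin N → β}

theorem monotoneOn_Iic_of_le_succ
    (step : ∀ i : Fin N, ∀ hi : (i : ℕ) + 1 < N, (i : ℕ) < n → g i ≤ g ⟨i + 1, hi⟩) :
    MonotoneOn g (Set.Iic n) := by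
  obtain ⟨k, rfl⟩ : ∃ k, N = k + 1 := ⟨N - 1, by have := n.pos; omega⟩
  refine monotoneOn_of_le_succ Set.ordConnected_Iic fun a ha _ hsa => ?_
  obtain ⟨i, rfl⟩ := Fin.eq_castSucc_of_ne_last (by simpa [Fin.top_eq_last] using ha)
  rw [Fin.orderSucc_castSucc] at hsa ⊢
  exact step i.castSucc (by simp) (Fin.castSucc_lt_iff_succ_le.2 hsa)

theorem antitoneOn_Ici_of_succ_le
    (step : ∀ i : Fin N, ∀ hi : (i : ℕ) + 1 < N, (n : ℕ) ≤ i → g ⟨i + 1, hi⟩ ≤ g i) :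
    AntitoneOn g (Set.Ici n) := by
  obtain ⟨k, rfl⟩ : ∃ k, N = k + 1 := ⟨N - 1, by have := n.pos; omega⟩
  refine antitoneOn_of_succ_le Set.ordConnected_Ici fun a ha haN _ => ?_
  obtain ⟨i, rfl⟩ := Fin.eq_castSucc_of_ne_last (by simpa [Fin.top_eq_last] using ha)
  rw [Fin.orderSucc_castSucc]
  exact step i.castSucc (by simp) haN

end StepConditions

namespace UnimodalWithPeak

variable {N : ℕ} {n : Fin N}

theorem of_le_succ {v : Fin N → ℝ} (hv : ∀ i, 0 ≤ v i)
    (up : ∀ i : Fin N, ∀ hi : (i : ℕ) + 1 < N, (i : ℕ) < n → v i ≤ v ⟨i + 1, hi⟩)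
    (down : ∀ i : Fin N, ∀ hi : (i : ℕ) + 1 < N, (n : ℕ) ≤ i → v ⟨i + 1, hi⟩ ≤ v i) :
    UnimodalWithPeak v n :=
  ⟨hv, fun _ _ hij hjn => monotoneOn_Iic_of_le_succ up (hij.trans hjn) hjn hij,
    fun _ _ hni hij => antitoneOn_Ici_of_succ_le down hni (hni.trans hij) hij⟩

theorem smul {v : Fin N → ℝ} (hv : UnimodalWithPeak v n) {a : ℝ} (ha : 0 ≤ a) :
    UnimodalWithPeak (a • v) n :=
  ⟨fun i => mul_nonneg ha (hv.1 i),
    fun i j hij hjn => mul_le_mul_of_nonneg_left (hv.2.1 i j hij hjn) ha,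
    fun i j hni hij => mul_le_mul_of_nonneg_left (hv.2.2 i j hni hij) ha⟩

theorem mulVec {ι : Type*} [Fintype ι] {A : Matrix (Fin N) ι ℝ}
    (hA : ∀ k, UnimodalWithPeak (Aᵀ k) n) {w : ι → ℝ} (hw : ∀ k, 0 ≤ w k) :
    UnimodalWithPeak (A *ᵥ w) n :=
  ⟨fun i => Finset.sum_nonneg fun k _ => mul_nonneg ((hA k).1 i) (hw k),
    fun i j hij hjn => Finset.sum_le_sum fun k _ =>
      mul_le_mul_of_nonneg_right ((hA k).2.1 i j hij hjn) (hw k),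
    fun i j hni hij => Finset.sum_le_sum fun k _ =>
      mul_le_mul_of_nonneg_right ((hA k).2.2 i j hni hij) (hw k)⟩

theorem of_mulVec_eq_smul {A : Matrix (Fin N) (Fin N) ℝ} (hA : ∀ k, UnimodalWithPeak (Aᵀ k) n)
    {μ : ℝ} (hμ : 0 < μ) {v : Fin N → ℝ} (hv : A *ᵥ v = μ • v) (hv0 : ∀ i, 0 ≤ v i) :
    UnimodalWithPeak v n := by
  have hv_eq : v = μ⁻¹ • A *ᵥ v := by rw [hv, smul_smul, inv_mul_cancel₀ hμ.ne', one_smul]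
  rw [hv_eq]
  exact (mulVec hA hv0).smul (inv_nonneg.2 hμ.le)

end UnimodalWithPeak

theorem eigenvalue_pos_of_pos_of_nonneg {ι : Type*} [Fintype ι] {A : Matrix ι ι ℝ}
    (hA : ∀ i j, 0 < A i j) {μ : ℝ} {v : ι → ℝ} (hv : A *ᵥ v = μ • v) (hv0 : v ≠ 0)
    (hnn : ∀ i, 0 ≤ v i) : 0 < μ := by
  obtain ⟨i, hi⟩ : ∃ i, 0 < v i := by
    by_contra! hle
    exact hv0 (funext fun i => le_antisymm (hle i) (hnn i))
  have hAv : 0 < (A *ᵥ v) i :=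
    Finset.sum_pos' (fun k _ => mul_nonneg (hA i k).le (hnn k))
      ⟨i, Finset.mem_univ _, mul_pos (hA i i) hi⟩
  rw [hv, Pi.smul_apply, smul_eq_mul] at hAv
  exact pos_of_mul_pos_left hAv hi.le

theorem transpose_mul_self_pos {ι κ : Type*} [Fintype ι] [Nonempty ι] {H : Matrix ι κ ℝ}
    (hH : ∀ i j, 0 < H i j) (i j : κ) : 0 < (Hᵀ * H) i j :=
  Finset.sum_pos (fun p _ => mul_pos (hH p i) (hH p j)) Finset.univ_nonempty

theorem UnimodalWithPeak.of_transpose_mul_self_mulVec_eq_smul {ι : Type*} [Fintype ι]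
    [Nonempty ι] {N : ℕ} {n : Fin N} {H : Matrix ι (Fin N) ℝ} (hH : ∀ p i, 0 < H p i)
    (hrows : ∀ p, UnimodalWithPeak (H p) n) {μ : ℝ} {v : Fin N → ℝ}
    (hv : (Hᵀ * H) *ᵥ v = μ • v) (hv0 : v ≠ 0) (hnn : ∀ i, 0 ≤ v i) :
    UnimodalWithPeak v n := by
  have hcols : ∀ k, UnimodalWithPeak ((Hᵀ * H)ᵀ k) n := fun k =>
    UnimodalWithPeak.mulVec (A := Hᵀ) hrows fun p => (hH p k).le
  exact UnimodalWithPeak.of_mulVec_eq_smul hcols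
    (eigenvalue_pos_of_pos_of_nonneg (transpose_mul_self_pos hH) hv hv0 hnn) hv hnn

theorem unimodal_signature_vector_general
    (N : ℕ) (n m : Fin N)
    (s : EuclideanSpace ℝ (Fin 2))
    (c : Fin N → Fin N → EuclideanSpace ℝ (Fin 2))
    -- along each row `p`, distances to the source strictly decrease up to column `n`
    (hcol_dec : ∀ p i : Fin N, ∀ hi : (i : ℕ) + 1 < N, (i : ℕ) < (n : ℕ) →
      ‖c p i - s‖ > ‖c p ⟨(i : ℕ) + 1, hi⟩ - s‖)
    -- and strictly increase from column `n` on
    (hcol_inc : ∀ p i : Fin N, ∀ hi : (i : ℕ) + 1 < N, (n : ℕ) ≤ (i : ℕ) →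
      ‖c p i - s‖ < ‖c p ⟨(i : ℕ) + 1, hi⟩ - s‖)
    -- along each column `q`, distances to the source strictly decrease up to row `m`
    (hrow_dec : ∀ q i : Fin N, ∀ hi : (i : ℕ) + 1 < N, (i : ℕ) < (m : ℕ) →
      ‖c i q - s‖ > ‖c ⟨(i : ℕ) + 1, hi⟩ q - s‖)
    -- and strictly increase from row `m` on
    (hrow_inc : ∀ q i : Fin N, ∀ hi : (i : ℕ) + 1 < N, (m : ℕ) ≤ (i : ℕ) →
      ‖c i q - s‖ < ‖c ⟨(i : ℕ) + 1, hi⟩ q - s‖)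
    (h : ℝ → ℝ) (hanti : StrictAnti h)
    (hpos : ∀ i j : Fin N, 0 < h ‖c i j - s‖)
    (H : Matrix (Fin N) (Fin N) ℝ)
    (hH : ∀ i j : Fin N, H i j = h ‖c i j - s‖) :
    (∀ (μ : ℝ) (v : Fin N → ℝ),
      (Hᵀ * H).mulVec v = μ • v → v ≠ 0 →
      (∀ (μ' : ℝ) (w : Fin N → ℝ), w ≠ 0 → (Hᵀ * H).mulVec w = μ' • w → μ' ≤ μ) →
      (∑ i, v i ^ 2 = 1) → (∀ i, 0 ≤ v i) →
      UnimodalWithPeak v n) ∧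
    (∀ (μ : ℝ) (u : Fin N → ℝ),
      (H * Hᵀ).mulVec u = μ • u → u ≠ 0 →
      (∀ (μ' : ℝ) (w : Fin N → ℝ), w ≠ 0 → (H * Hᵀ).mulVec w = μ' • w → μ' ≤ μ) →
      (∑ i, u i ^ 2 = 1) → (∀ i, 0 ≤ u i) →
      UnimodalWithPeak u m) := by
  obtain rfl : H = of fun i j => h ‖c i j - s‖ := ext hH
  have hrows : ∀ p, UnimodalWithPeak (of (fun i j => h ‖c i j - s‖) p) n := fun p =>
    .of_le_succ (fun j => (hpos p j).le)
      (fun i hi hin => (hanti (hcol_dec p i hi hin)).le)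
      (fun i hi hni => (hanti (hcol_inc p i hi hni)).le)
  have hcols : ∀ q, UnimodalWithPeak ((of fun i j => h ‖c i j - s‖)ᵀ q) m := fun q =>
    .of_le_succ (fun i => (hpos i q).le)
      (fun i hi him => (hanti (hrow_dec q i hi him)).le)
      (fun i hi hmi => (hanti (hrow_inc q i hi hmi)).le)
  have : Nonempty (Fin N) := ⟨n⟩
  refine ⟨fun μ v hv hv0 _ _ hnn => .of_transpose_mul_self_mulVec_eq_smul hpos hrows hv hv0 hnn,
    fun μ u hu hu0 _ _ hnn => ?_⟩
  rw [← transpose_transpose (of _)] at hu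
  exact .of_transpose_mul_self_mulVec_eq_smul (fun i j => hpos j i) hcols hu hu0 hnn

/-- Theorem 1 (Unimodal Signature Vector): the nonnegative unit eigenvectors of `HᵀH`
(resp. `HHᵀ`) for the largest eigenvalue are unimodal with peak at index `n` (resp. `m`). -/
theorem unimodal_signature_vector
    (N : ℕ) (hN : 1 ≤ N) (n m : Fin N)
    (s : EuclideanSpace ℝ (Fin 2))
    (c : Fin N → Fin N → EuclideanSpace ℝ (Fin 2))
    -- along each row `p`, distances to the source strictly decrease up to column `n`
    (hcol_dec : ∀ p i : Fin N, ∀ hi : (i : ℕ) + 1 < N, (i : ℕ) < (n : ℕ) →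
      ‖c p i - s‖ > ‖c p ⟨(i : ℕ) + 1, hi⟩ - s‖)
    -- and strictly increase from column `n` on
    (hcol_inc : ∀ p i : Fin N, ∀ hi : (i : ℕ) + 1 < N, (n : ℕ) ≤ (i : ℕ) →
      ‖c p i - s‖ < ‖c p ⟨(i : ℕ) + 1, hi⟩ - s‖)
    -- along each column `q`, distances to the source strictly decrease up to row `m`
    (hrow_dec : ∀ q i : Fin N, ∀ hi : (i : ℕ) + 1 < N, (i : ℕ) < (m : ℕ) →
      ‖c i q - s‖ > ‖c ⟨(i : ℕ) + 1, hi⟩ q - s‖)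
    -- and strictly increase from row `m` on
    (hrow_inc : ∀ q i : Fin N, ∀ hi : (i : ℕ) + 1 < N, (m : ℕ) ≤ (i : ℕ) →
      ‖c i q - s‖ < ‖c ⟨(i : ℕ) + 1, hi⟩ q - s‖)
    (h : ℝ → ℝ) (hanti : StrictAnti h)
    (hpos : ∀ i j : Fin N, 0 < h ‖c i j - s‖)
    (H : Matrix (Fin N) (Fin N) ℝ)
    (hH : ∀ i j : Fin N, H i j = h ‖c i j - s‖) :
    (∀ (μ : ℝ) (v : Fin N → ℝ),
      (Hᵀ * H).mulVec v = μ • v → v ≠ 0 →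
      (∀ (μ' : ℝ) (w : Fin N → ℝ), w ≠ 0 → (Hᵀ * H).mulVec w = μ' • w → μ' ≤ μ) →
      (∑ i, v i ^ 2 = 1) → (∀ i, 0 ≤ v i) →
      UnimodalWithPeak v n) ∧
    (∀ (μ : ℝ) (u : Fin N → ℝ),
      (H * Hᵀ).mulVec u = μ • u → u ≠ 0 →
      (∀ (μ' : ℝ) (w : Fin N → ℝ), w ≠ 0 → (H * Hᵀ).mulVec w = μ' • w → μ' ≤ μ) →
      (∑ i, u i ^ 2 = 1) → (∀ i, 0 ≤ u i) →
      UnimodalWithPeak u m) :=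
  unimodal_signature_vector_general N n m s c hcol_dec hcol_inc hrow_dec hrow_inc h hanti hpos H hH
end

section
/- Let N ≥ 1, n ∈ {1,…,N}, and let R be an N×N real symmetric matrix with strictly positive entries such that for every column index j and every i ∈ {1,…,N−1}: R_{i,j} < R_{i+1,j} if i < n, and R_{i,j} > R_{i+1,j} if i ≥ n. Then for every integer q ≥ 1, the matrix power R^q satisfies the same strict inequalities: for every column index j and every i ∈ {1,…,N−1}, (R^q)_{i,j} < (R^q)_{i+1,j} if i < n, and (R^q)_{i,j} > (R^q)_{i+1,j} if i ≥ n. -/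
open Matrix

/-- Lemma 5 (Appendix A): if the symmetric positive matrix `R` has columns that are
strictly increasing up to row `n` and strictly decreasing afterwards, then so does
every matrix power `R^q`, `q ≥ 1`. -/
theorem power_columns_unimodal
    (N : ℕ) (hN : 1 ≤ N) (n : Fin N)
    (R : Matrix (Fin N) (Fin N) ℝ)
    (hsym : R.IsSymm)
    (hpos : ∀ i j : Fin N, 0 < R i j)
    (hmono : ∀ (j i : Fin N) (hi : (i : ℕ) + 1 < N),
      ((i : ℕ) < (n : ℕ) → R i j < R ⟨(i : ℕ) + 1, hi⟩ j) ∧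
      ((n : ℕ) ≤ (i : ℕ) → R ⟨(i : ℕ) + 1, hi⟩ j < R i j)) :
    ∀ q : ℕ, 1 ≤ q → ∀ (j i : Fin N) (hi : (i : ℕ) + 1 < N),
      ((i : ℕ) < (n : ℕ) → (R ^ q) i j < (R ^ q) ⟨(i : ℕ) + 1, hi⟩ j) ∧
      ((n : ℕ) ≤ (i : ℕ) → (R ^ q) ⟨(i : ℕ) + 1, hi⟩ j < (R ^ q) i j) := by
  have hNE : Nonempty (Fin N) := ⟨⟨0, hN⟩⟩
  -- positivity of powers
  have hpow : ∀ q : ℕ, 1 ≤ q → ∀ i j : Fin N, 0 < (R ^ q) i j := by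
    intro q hq
    induction q, hq using Nat.le_induction with
    | base => intro i j; simpa using hpos i j
    | succ q hq ih =>
      intro i j
      rw [pow_succ', Matrix.mul_apply]
      exact Finset.sum_pos (fun k _ => mul_pos (hpos i k) (ih k j))
        Finset.univ_nonempty
  intro q hq
  induction q, hq using Nat.le_induction with
  | base => intro j i hi; simpa using hmono j i hi
  | succ q hq ih =>
    intro j i hi
    rw [pow_succ']
    constructor
    · intro hin
      rw [Matrix.mul_apply, Matrix.mul_apply]
      refine Finset.sum_lt_sum_of_nonempty Finset.univ_nonempty fun k _ => ?_
      exact mul_lt_mul_of_pos_right ((hmono k i hi).1 hin) (hpow q hq k j)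
    · intro hni
      rw [Matrix.mul_apply, Matrix.mul_apply]
      refine Finset.sum_lt_sum_of_nonempty Finset.univ_nonempty fun k _ => ?_
      exact mul_lt_mul_of_pos_right ((hmono k i hi).2 hni) (hpow q hq k j)
end

section
/- Let w : ℝ → ℝ be a nonnegative, square-integrable function that is even (w(−x) = w(x) for all x) and nonincreasing on [0, ∞). Then the autocorrelation function τ(t) = ∫_ℝ w(x) w(x − t) dx satisfies: (i) τ(t) ≥ 0 for all t; (ii) τ(−t) = τ(t) for all t; (iii) τ is nonincreasing on [0, ∞). If moreover w is strictly decreasing on [0, ∞), then τ is strictly decreasing on [0, ∞). -/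
/-!
Write `c = s + t` and fold the integral of `w x * (w (x - s) - w (x - t))` about `c / 2` by
pairing `x` with `c - x`. Because `w` is even, `w (c - x - s) = w (x - t)`, so the two halves
combine into `(w x - w (c - x)) * (w (x - s) - w (x - t))` over `x ≤ c / 2`. For `0 ≤ s ≤ t`
and such `x` we have `|x| ≤ |c - x|` and `|x - s| ≤ |x - t|`, so both factors are nonnegative
since `w` decreases in `|x|`; they are positive for `x < c / 2` when `s < t` and `w` is
strictly decreasing.
-/

open MeasureTheory Set

theorem Function.Even.apply_abs {α β : Type*} [AddCommGroup α] [LinearOrder α]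
    [IsOrderedAddMonoid α] {f : α → β} (hf : f.Even) (x : α) : f |x| = f x := by
  rcases abs_choice x with h | h <;> simp [h, hf x]

theorem Function.Even.apply_le_apply_of_abs_le {w : ℝ → ℝ} (he : w.Even)
    (hw : AntitoneOn w (Ici 0)) {a b : ℝ} (hab : |a| ≤ |b|) : w b ≤ w a := by
  rw [← he.apply_abs a, ← he.apply_abs b]
  exact hw (abs_nonneg a) (abs_nonneg b) hab

theorem Function.Even.apply_lt_apply_of_abs_lt {w : ℝ → ℝ} (he : w.Even)
    (hw : StrictAntiOn w (Ici 0)) {a b : ℝ} (hab : |a| < |b|) : w b < w a := by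
  rw [← he.apply_abs a, ← he.apply_abs b]
  exact hw (abs_nonneg a) (abs_nonneg b) hab

theorem setIntegral_pos_of_forall_pos {X : Type*} [MeasurableSpace X] {μ : Measure X}
    {s : Set X} {f : X → ℝ} (hs : MeasurableSet s) (hμs : μ s ≠ 0)
    (hf : IntegrableOn f s μ) (hpos : ∀ x ∈ s, 0 < f x) : 0 < ∫ x in s, f x ∂μ := by
  rw [setIntegral_pos_iff_support_of_nonneg_ae
    ((ae_restrict_iff' hs).2 (.of_forall fun x hx => (hpos x hx).le)) hf]
  convert pos_iff_ne_zero.2 hμs using 2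
  exact inter_eq_right.2 fun x hx => (hpos x hx).ne'

theorem integral_eq_setIntegral_Iic_add_comp_sub {E : Type*} [NormedAddCommGroup E]
    [NormedSpace ℝ E] {f : ℝ → E} (hf : Integrable f) (c : ℝ) :
    ∫ x, f x = ∫ x in Iic (c / 2), (f x + f (c - x)) := by
  have hreflect : ∫ x in Ioi (c / 2), f x = ∫ x in Iic (c / 2), f (c - x) := by
    have hpre : (c - ·) ⁻¹' Ici (c / 2) = Iic (c / 2) := by
      ext x
      simp only [mem_preimage, mem_Ici, mem_Iic]
      constructor <;> intro h <;> linarith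
    rw [← integral_Ici_eq_integral_Ioi, ← hpre,
      (Measure.measurePreserving_sub_left volume c).setIntegral_preimage_emb
        (MeasurableEquiv.subLeft c).measurableEmbedding]
  rw [integral_add hf.integrableOn (hf.comp_sub_left c).integrableOn, ← hreflect,
    ← integral_add_compl measurableSet_Iic hf, compl_Iic]

theorem integrable_mul_comp_sub {f g : ℝ → ℝ} (hf : MemLp f 2) (hg : MemLp g 2) (t : ℝ) :
    Integrable fun x => f x * g (x - t) :=
  hf.integrable_mul (hg.comp_measurePreserving (measurePreserving_sub_right volume t))

noncomputable def autocorrelation (w : ℝ → ℝ) (t : ℝ) : ℝ := ∫ x, w x * w (x - t)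

section Autocorrelation

variable {w : ℝ → ℝ}

theorem autocorrelation_neg (t : ℝ) : autocorrelation w (-t) = autocorrelation w t := by
  rw [autocorrelation, autocorrelation, ← integral_sub_right_eq_self _ t]
  simp only [sub_neg_eq_add, sub_add_cancel, mul_comm]

theorem autocorrelation_nonneg (hw : ∀ x, 0 ≤ w x) (t : ℝ) : 0 ≤ autocorrelation w t :=
  integral_nonneg fun x => mul_nonneg (hw x) (hw _)

theorem integrable_autocorrelation_fold (hw : MemLp w 2) (s t : ℝ) :
    Integrable fun x => (w x - w (s + t - x)) * (w (x - s) - w (x - t)) := by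
  have hsub (a : ℝ) : MemLp (fun x => w (x - a)) 2 :=
    hw.comp_measurePreserving (measurePreserving_sub_right volume a)
  have href : MemLp (fun x => w (s + t - x)) 2 :=
    hw.comp_measurePreserving (Measure.measurePreserving_sub_left volume (s + t))
  exact (hw.sub href).integrable_mul ((hsub s).sub (hsub t))

theorem autocorrelation_sub_autocorrelation (hw : MemLp w 2) (he : w.Even) (s t : ℝ) :
    autocorrelation w s - autocorrelation w t =
      ∫ x in Iic ((s + t) / 2), (w x - w (s + t - x)) * (w (x - s) - w (x - t)) := by
  have hs := integrable_mul_comp_sub hw hw s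
  have ht := integrable_mul_comp_sub hw hw t
  rw [autocorrelation, autocorrelation, ← integral_sub hs ht,
    integral_eq_setIntegral_Iic_add_comp_sub
      (f := fun x => w x * w (x - s) - w x * w (x - t)) (hs.sub ht) (s + t)]
  refine integral_congr_ae (.of_forall fun x => ?_)
  simp only [show s + t - x - s = -(x - t) by ring, show s + t - x - t = -(x - s) by ring, he.eq]
  ring

theorem autocorrelation_antitoneOn (hw : MemLp w 2) (he : w.Even)
    (hanti : AntitoneOn w (Ici 0)) : AntitoneOn (autocorrelation w) (Ici 0) := by
  intro s (hs : 0 ≤ s) t _ hst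
  rw [← sub_nonneg, autocorrelation_sub_autocorrelation hw he]
  refine setIntegral_nonneg measurableSet_Iic fun x (hx : x ≤ (s + t) / 2) => ?_
  have h₁ : |x| ≤ |s + t - x| := abs_le_abs (by linarith) (by linarith)
  have h₂ : |x - s| ≤ |x - t| := abs_sub_comm t x ▸ abs_le_abs (by linarith) (by linarith)
  exact mul_nonneg (sub_nonneg.2 (he.apply_le_apply_of_abs_le hanti h₁))
    (sub_nonneg.2 (he.apply_le_apply_of_abs_le hanti h₂))

theorem autocorrelation_strictAntiOn (hw : MemLp w 2) (he : w.Even)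
    (hanti : StrictAntiOn w (Ici 0)) : StrictAntiOn (autocorrelation w) (Ici 0) := by
  intro s (hs : 0 ≤ s) t _ hst
  rw [← sub_pos, autocorrelation_sub_autocorrelation hw he, integral_Iic_eq_integral_Iio]
  refine setIntegral_pos_of_forall_pos measurableSet_Iio (by simp)
    (integrable_autocorrelation_fold hw s t).integrableOn
    fun x (hx : x < (s + t) / 2) => ?_
  have h₁ : |x| < |s + t - x| :=
    (abs_lt.2 ⟨by linarith, by linarith⟩).trans_le (le_abs_self _)
  have h₂ : |x - s| < |x - t| :=
    abs_sub_comm t x ▸ (abs_lt.2 ⟨by linarith, by linarith⟩).trans_le (le_abs_self _)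
  exact mul_pos (sub_pos.2 (he.apply_lt_apply_of_abs_lt hanti h₁))
    (sub_pos.2 (he.apply_lt_apply_of_abs_lt hanti h₂))

end Autocorrelation

/-- Lemma 1 (Monotone property): the autocorrelation
`τ(t) = ∫ w(x) w(x − t) dx` of a nonnegative, square-integrable, even function `w`
that is nonincreasing on `[0,∞)` is nonnegative, even, and nonincreasing on `[0,∞)`;
it is strictly decreasing on `[0,∞)` if `w` is strictly decreasing on `[0,∞)`. -/
theorem autocorrelation_monotone
    (w : ℝ → ℝ)
    (hw_nonneg : ∀ x, 0 ≤ w x)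
    (hw_L2 : MemLp w 2 (volume : Measure ℝ))
    (hw_even : ∀ x, w (-x) = w x)
    (hw_anti : AntitoneOn w (Set.Ici (0 : ℝ)))
    (τ : ℝ → ℝ)
    (hτ : ∀ t, τ t = ∫ x : ℝ, w x * w (x - t)) :
    (∀ t, 0 ≤ τ t) ∧
    (∀ t, τ (-t) = τ t) ∧
    AntitoneOn τ (Set.Ici (0 : ℝ)) ∧
    (StrictAntiOn w (Set.Ici (0 : ℝ)) → StrictAntiOn τ (Set.Ici (0 : ℝ))) := by
  obtain rfl : τ = autocorrelation w := funext hτ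
  exact ⟨autocorrelation_nonneg hw_nonneg, autocorrelation_neg,
    autocorrelation_antitoneOn hw_L2 hw_even hw_anti,
    autocorrelation_strictAntiOn hw_L2 hw_even⟩
end

section
/- Let w : ℝ → ℝ be a nonnegative, square-integrable, even function (w(−x) = w(x)) that is strictly decreasing on [0, ∞), and let s ∈ ℝ. Then the function t ↦ ∫_ℝ w(y − s) · w(−y + t − s) dy attains its value at t = 2s strictly above its value at any other point: for every t ≠ 2s, ∫_ℝ w(y − s) w(−y + t − s) dy < ∫_ℝ w(y − s) w(−y + 2s − s) dy. In particular, t = 2s is the unique maximizer of the reflected correlation function. -/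
open MeasureTheory

/-! By evenness the reflected profile `y ↦ w (-y + t - s)` is the translate `w (· - (t - s))`,
so both factors are translates of `w` with the same `L²` norm. For `f, g` of equal norm,
`2 (‖f‖² - ⟪f, g⟫) = ‖f - g‖²`, which is positive unless `f = g` a.e.; and two distinct
translates of `w` agree only at the midpoint of the shifts, since `w` is injective on `[0, ∞)`. -/

theorem integral_mul_lt_integral_mul_self_of_ne {α : Type*} [MeasurableSpace α] {μ : Measure α}
    {f g : α → ℝ} (hf : MemLp f 2 μ) (hg : MemLp g 2 μ)
    (hnorm : ∫ x, g x * g x ∂μ = ∫ x, f x * f x ∂μ) (hne : ¬f =ᵐ[μ] g) :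
    ∫ x, f x * g x ∂μ < ∫ x, f x * f x ∂μ := by
  have hfg : Integrable (fun x ↦ f x * g x) μ := hf.integrable_mul hg
  have hff : Integrable (fun x ↦ f x * f x) μ := hf.integrable_mul hf
  have hgg : Integrable (fun x ↦ g x * g x) μ := hg.integrable_mul hg
  have hpos : 0 < ∫ x, (f x - g x) * (f x - g x) ∂μ := by
    refine (integral_nonneg fun x ↦ mul_self_nonneg _).lt_of_ne' fun h0 ↦ hne ?_
    have hsq := (integral_eq_zero_iff_of_nonneg (fun x ↦ mul_self_nonneg (f x - g x))
      ((hf.sub hg).integrable_mul (hf.sub hg))).1 h0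
    filter_upwards [hsq] with x hx
    exact sub_eq_zero.1 (mul_self_eq_zero.1 hx)
  have hexpand : ∫ x, (f x - g x) * (f x - g x) ∂μ =
      ∫ x, f x * f x ∂μ + ∫ x, g x * g x ∂μ - 2 * ∫ x, f x * g x ∂μ := by
    calc ∫ x, (f x - g x) * (f x - g x) ∂μ
        = ∫ x, (f x * f x + g x * g x) - 2 * (f x * g x) ∂μ := by
          congr 1; ext x; ring
      _ = _ := by
          have hsum : Integrable (fun x ↦ f x * f x + g x * g x) μ := hff.add hgg
          rw [integral_sub hsum (hfg.const_mul 2), integral_add hff hgg, integral_const_mul]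
  linarith

theorem abs_eq_abs_of_apply_eq {w : ℝ → ℝ} (hw_even : ∀ x, w (-x) = w x)
    (hw_anti : StrictAntiOn w (Set.Ici 0)) {a b : ℝ} (h : w a = w b) : |a| = |b| := by
  have hw_abs : ∀ x, w |x| = w x := fun x ↦ by
    rcases abs_choice x with hx | hx <;> rw [hx]
    exact hw_even x
  rw [← hw_abs a, ← hw_abs b] at h
  exact hw_anti.injOn (abs_nonneg a) (abs_nonneg b) h

theorem not_translate_ae_eq_translate {w : ℝ → ℝ} (hw_even : ∀ x, w (-x) = w x)
    (hw_anti : StrictAntiOn w (Set.Ici 0)) {a b : ℝ} (hab : a ≠ b) :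
    ¬(fun y ↦ w (y - a)) =ᵐ[volume] fun y ↦ w (y - b) := by
  intro h
  obtain ⟨y, hy, hmid⟩ := (h.and (volume.ae_ne ((a + b) / 2))).exists
  rcases abs_eq_abs.1 (abs_eq_abs_of_apply_eq hw_even hw_anti hy) with h' | h'
  · exact hab (by linarith)
  · exact hmid (by linarith)

theorem integral_mul_translate_lt {w : ℝ → ℝ} (hw_L2 : MemLp w 2 volume)
    (hw_even : ∀ x, w (-x) = w x) (hw_anti : StrictAntiOn w (Set.Ici 0)) {a b : ℝ}
    (hab : a ≠ b) :
    ∫ y, w (y - a) * w (y - b) < ∫ y, w (y - a) * w (y - a) := by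
  have hmem : ∀ c, MemLp (fun y ↦ w (y - c)) 2 volume := fun c ↦
    hw_L2.comp_measurePreserving (measurePreserving_sub_right volume c)
  refine integral_mul_lt_integral_mul_self_of_ne (hmem a) (hmem b) ?_
    (not_translate_ae_eq_translate hw_even hw_anti hab)
  rw [integral_sub_right_eq_self (fun y ↦ w y * w y) a,
    integral_sub_right_eq_self (fun y ↦ w y * w y) b]

theorem reflected_correlation_unique_max_general
    (w : ℝ → ℝ)
    (hw_L2 : MemLp w 2 (volume : Measure ℝ))
    (hw_even : ∀ x, w (-x) = w x)
    (hw_anti : StrictAntiOn w (Set.Ici (0 : ℝ)))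
    (s : ℝ) :
    ∀ t : ℝ, t ≠ 2 * s →
      (∫ y : ℝ, w (y - s) * w (-y + t - s)) <
        ∫ y : ℝ, w (y - s) * w (-y + 2 * s - s) := by
  intro t ht
  have hreflect : ∀ c y, w (-y + c - s) = w (y - (c - s)) := fun c y ↦ by
    rw [← hw_even]; ring_nf
  simp_rw [hreflect]
  rw [show 2 * s - s = s by ring]
  exact integral_mul_translate_lt hw_L2 hw_even hw_anti fun h ↦ ht (by linarith)

/-- The reflected correlation of the shifted symmetric unimodal profile `w(· − s)`
is uniquely maximized at `t = 2s`. -/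
theorem reflected_correlation_unique_max
    (w : ℝ → ℝ)
    (hw_nonneg : ∀ x, 0 ≤ w x)
    (hw_L2 : MemLp w 2 (volume : Measure ℝ))
    (hw_even : ∀ x, w (-x) = w x)
    (hw_anti : StrictAntiOn w (Set.Ici (0 : ℝ)))
    (s : ℝ) :
    ∀ t : ℝ, t ≠ 2 * s →
      (∫ y : ℝ, w (y - s) * w (-y + t - s)) <
        ∫ y : ℝ, w (y - s) * w (-y + 2 * s - s) :=
  reflected_correlation_unique_max_general w hw_L2 hw_even hw_anti s
end

section
/- Let h : ℝ → ℝ be Lipschitz continuous with Lipschitz constant K ≥ 0, let α ≥ 0, L > 0, let N ≥ 1 be an integer, let s ∈ ℝ², let c(i,j) ∈ ℝ² for i,j ∈ {1,…,N}, and let δ ∈ ℝ² with ‖δ‖₂ ≤ L/(√2·N). Define the N×N matrices H and H̃ by H_{ij} = (L/N)·α·h(‖c(i,j) − s‖₂) and H̃_{ij} = (L/N)·α·h(‖c(i,j) + δ − s‖₂). Then every entry satisfies |H_{ij} − H̃_{ij}| ≤ α K L² / (√2·N²), and consequently ‖H − H̃‖_F ≤ α K L² / (√2·N). -/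
open Matrix

/-- Discretization-shift perturbation bound (52), Appendix B: shifting the sampling
grid by `δ` with `‖δ‖ ≤ L/(√2 N)` changes each entry of the sampled energy matrix by
at most `αKL²/(√2 N²)`, hence the Frobenius norm by at most `αKL²/(√2 N)`. -/
theorem grid_shift_perturbation
    (h : ℝ → ℝ) (K : ℝ) (hK : 0 ≤ K)
    (hLip : ∀ x y : ℝ, |h x - h y| ≤ K * |x - y|)
    (α : ℝ) (hα : 0 ≤ α) (L : ℝ) (hL : 0 < L)
    (N : ℕ) (hN : 1 ≤ N)
    (s : EuclideanSpace ℝ (Fin 2))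
    (c : Fin N → Fin N → EuclideanSpace ℝ (Fin 2))
    (δ : EuclideanSpace ℝ (Fin 2))
    (hδ : ‖δ‖ ≤ L / (Real.sqrt 2 * N))
    (H Ht : Matrix (Fin N) (Fin N) ℝ)
    (hH : ∀ i j, H i j = (L / N) * α * h ‖c i j - s‖)
    (hHt : ∀ i j, Ht i j = (L / N) * α * h ‖c i j + δ - s‖) :
    (∀ i j, |H i j - Ht i j| ≤ α * K * L ^ 2 / (Real.sqrt 2 * N ^ 2)) ∧
    Real.sqrt (∑ i, ∑ j, (H i j - Ht i j) ^ 2) ≤ α * K * L ^ 2 / (Real.sqrt 2 * N) := by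
  have hNpos : (0:ℝ) < N := by
    have : 0 < N := hN
    exact_mod_cast this
  have hs2 : (0:ℝ) < Real.sqrt 2 := Real.sqrt_pos.mpr (by norm_num)
  set B := α * K * L ^ 2 / (Real.sqrt 2 * (N:ℝ) ^ 2) with hB
  have hBnn : 0 ≤ B := by positivity
  have entry : ∀ i j, |H i j - Ht i j| ≤ B := by
    intro i j
    rw [hH, hHt]
    have h1 : |h ‖c i j - s‖ - h ‖c i j + δ - s‖| ≤ K * ‖δ‖ := by
      refine (hLip _ _).trans ?_
      refine mul_le_mul_of_nonneg_left ?_ hK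
      calc |‖c i j - s‖ - ‖c i j + δ - s‖| ≤ ‖(c i j - s) - (c i j + δ - s)‖ :=
            abs_norm_sub_norm_le _ _
        _ = ‖δ‖ := by rw [show (c i j - s) - (c i j + δ - s) = -δ by abel, norm_neg]
    calc |(L/N)*α*h ‖c i j - s‖ - (L/N)*α*h ‖c i j + δ - s‖|
        = (L/N)*α * |h ‖c i j - s‖ - h ‖c i j + δ - s‖| := by
          rw [← mul_sub, abs_mul, abs_of_nonneg (by positivity)]
      _ ≤ (L/N)*α*(K*‖δ‖) := by
          refine mul_le_mul_of_nonneg_left h1 (by positivity)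
      _ ≤ (L/N)*α*(K*(L/(Real.sqrt 2 * N))) := by
          have : K * ‖δ‖ ≤ K * (L/(Real.sqrt 2 * N)) := mul_le_mul_of_nonneg_left hδ hK
          exact mul_le_mul_of_nonneg_left this (by positivity)
      _ = B := by rw [hB]; field_simp
  refine ⟨entry, ?_⟩
  have hsum : ∑ i, ∑ j, (H i j - Ht i j) ^ 2 ≤ ((N:ℝ) * B) ^ 2 := by
    calc ∑ i, ∑ j, (H i j - Ht i j) ^ 2 ≤ ∑ _i : Fin N, ∑ _j : Fin N, B ^ 2 := by
          refine Finset.sum_le_sum fun i _ => Finset.sum_le_sum fun j _ => ?_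
          have := entry i j
          nlinarith [abs_nonneg (H i j - Ht i j), sq_abs (H i j - Ht i j)]
      _ = ((N:ℝ) * B) ^ 2 := by
          simp [Finset.sum_const, Finset.card_univ]
          ring
  calc Real.sqrt (∑ i, ∑ j, (H i j - Ht i j) ^ 2) ≤ Real.sqrt (((N:ℝ) * B) ^ 2) :=
        Real.sqrt_le_sqrt hsum
    _ = (N:ℝ) * B := Real.sqrt_sq (by positivity)
    _ = α * K * L ^ 2 / (Real.sqrt 2 * N) := by rw [hB]; field_simp
end

section
/- Let D > 0 and let τ : ℝ → ℝ be differentiable on (0, ∞) with 0 ≤ τ(u) < 1 and τ'(u) < 0 for every u > 0, and suppose that s·τ'(t) > t·τ'(s) for all 0 < s < t. Then the function μ(θ) = [(1 − τ(D cos θ))(1 − τ(D sin θ))] / [(1 + τ(D cos θ))(1 + τ(D sin θ))] is strictly increasing on the interval (0, π/4). -/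
open Real

/-- The analytic core of Theorem 4 (Appendix D): under the derivative condition
`s·τ'(t) > t·τ'(s)` for `0 < s < t`, the singular-value ratio
`μ(θ) = [(1 − τ(D cos θ))(1 − τ(D sin θ))] / [(1 + τ(D cos θ))(1 + τ(D sin θ))]`
is strictly increasing on `(0, π/4)`. -/
theorem mu_strictMonoOn
    (D : ℝ) (hD : 0 < D)
    (τ : ℝ → ℝ)
    (hdiff : ∀ u : ℝ, 0 < u → DifferentiableAt ℝ τ u)
    (hτ_nonneg : ∀ u : ℝ, 0 < u → 0 ≤ τ u)
    (hτ_lt_one : ∀ u : ℝ, 0 < u → τ u < 1)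
    (hτ' : ∀ u : ℝ, 0 < u → deriv τ u < 0)
    (hcond : ∀ s t : ℝ, 0 < s → s < t → s * deriv τ t > t * deriv τ s) :
    StrictMonoOn
      (fun θ : ℝ =>
        ((1 - τ (D * Real.cos θ)) * (1 - τ (D * Real.sin θ))) /
        ((1 + τ (D * Real.cos θ)) * (1 + τ (D * Real.sin θ))))
      (Set.Ioo 0 (π / 4)) := by
  set f : ℝ → ℝ := fun θ : ℝ =>
        ((1 - τ (D * Real.cos θ)) * (1 - τ (D * Real.sin θ))) /
        ((1 + τ (D * Real.cos θ)) * (1 + τ (D * Real.sin θ))) with hf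
  -- τ is strictly decreasing on (0,∞)
  have hanti : StrictAntiOn τ (Set.Ioi (0:ℝ)) := by
    apply strictAntiOn_of_deriv_neg (convex_Ioi 0)
    · exact fun u hu => (hdiff u hu).continuousAt.continuousWithinAt
    · intro u hu
      rw [interior_Ioi] at hu
      exact hτ' u hu
  -- key: at each point of the interval, f has positive derivative
  have key : ∀ x ∈ Set.Ioo (0:ℝ) (π/4), ∃ v : ℝ, 0 < v ∧ HasDerivAt f v x := by
    intro x hx
    obtain ⟨hx0, hx4⟩ := hx
    have hsin : 0 < Real.sin x := Real.sin_pos_of_pos_of_lt_pi hx0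
      (lt_trans hx4 (by linarith [Real.pi_pos]))
    have hcos : 0 < Real.cos x := Real.cos_pos_of_mem_Ioo
      ⟨by linarith [Real.pi_pos], by linarith [Real.pi_pos]⟩
    have hsc : Real.sin x < Real.cos x := by
      have := Real.cos_lt_cos_of_nonneg_of_le_pi (le_of_lt hx0)
        (by linarith [Real.pi_pos]) hx4
      calc Real.sin x = Real.cos (π/2 - x) := (Real.cos_pi_div_two_sub x).symm
        _ < Real.cos x := by
            apply Real.cos_lt_cos_of_nonneg_of_le_pi (by linarith [Real.pi_pos])
              (by linarith [Real.pi_pos])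
            linarith [Real.pi_pos]
    set s := D * Real.sin x with hs_def
    set c := D * Real.cos x with hc_def
    have hs : 0 < s := mul_pos hD hsin
    have hc : 0 < c := mul_pos hD hcos
    have hsc' : s < c := by
      apply mul_lt_mul_of_pos_left hsc hD
    set a := τ c with ha_def
    set b := τ s with hb_def
    set a' := deriv τ c with ha'_def
    set b' := deriv τ s with hb'_def
    have hab : a < b := hanti hs hc hsc'
    have ha0 : 0 ≤ a := hτ_nonneg c hc
    have hb0 : 0 ≤ b := hτ_nonneg s hs
    have ha1 : a < 1 := hτ_lt_one c hc
    have hb1 : b < 1 := hτ_lt_one s hs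
    have ha' : a' < 0 := hτ' c hc
    have hb' : b' < 0 := hτ' s hs
    have hkey : s * a' > c * b' := hcond s c hs hsc'
    -- derivative of θ ↦ τ (D cos θ)
    have h1 : HasDerivAt (fun θ => τ (D * Real.cos θ)) (a' * (D * (-Real.sin x))) x := by
      exact (hdiff c hc).hasDerivAt.comp x ((Real.hasDerivAt_cos x).const_mul D)
    have h2 : HasDerivAt (fun θ => τ (D * Real.sin θ)) (b' * (D * Real.cos x)) x := by
      exact (hdiff s hs).hasDerivAt.comp x ((Real.hasDerivAt_sin x).const_mul D)
    -- numerator and denominator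
    have hN : HasDerivAt (fun θ => (1 - τ (D * Real.cos θ)) * (1 - τ (D * Real.sin θ)))
        ((-(a' * (D * (-Real.sin x)))) * (1 - b) + (1 - a) * (-(b' * (D * Real.cos x)))) x :=
      (h1.const_sub 1).mul (h2.const_sub 1)
    have hM : HasDerivAt (fun θ => (1 + τ (D * Real.cos θ)) * (1 + τ (D * Real.sin θ)))
        ((a' * (D * (-Real.sin x))) * (1 + b) + (1 + a) * (b' * (D * Real.cos x))) x :=
      (h1.const_add 1).mul (h2.const_add 1)
    have hMpos : (0:ℝ) < (1 + a) * (1 + b) :=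
      mul_pos (by linarith) (by linarith)
    have hdf : HasDerivAt f
        (((((-(a' * (D * (-Real.sin x)))) * (1 - b) + (1 - a) * (-(b' * (D * Real.cos x)))) *
            ((1 + a) * (1 + b)) -
          ((1 - a) * (1 - b)) *
            ((a' * (D * (-Real.sin x))) * (1 + b) + (1 + a) * (b' * (D * Real.cos x)))) /
          ((1 + a) * (1 + b)) ^ 2)) x := hN.div hM (ne_of_gt hMpos)
    refine ⟨_, ?_, hdf⟩
    apply div_pos _ (pow_pos hMpos 2)
    have hnum : (((-(a' * (D * (-Real.sin x)))) * (1 - b) + (1 - a) * (-(b' * (D * Real.cos x)))) *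
            ((1 + a) * (1 + b)) -
          ((1 - a) * (1 - b)) *
            ((a' * (D * (-Real.sin x))) * (1 + b) + (1 + a) * (b' * (D * Real.cos x))))
        = 2 * (s * a' * (1 - b^2) - c * b' * (1 - a^2)) := by
      rw [hs_def, hc_def]; ring
    rw [hnum]
    have hsa : s * a' < 0 := mul_neg_of_pos_of_neg hs ha'
    have hsq : a^2 ≤ b^2 := by nlinarith
    nlinarith [mul_pos (sub_pos.2 hkey) (show (0:ℝ) < 1 - a^2 by nlinarith),
      mul_nonneg (le_of_lt (neg_pos.2 hsa)) (sub_nonneg.2 hsq)]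
  -- conclude
  apply strictMonoOn_of_deriv_pos (convex_Ioo 0 (π/4))
  · intro x hx
    obtain ⟨v, hv, hder⟩ := key x hx
    exact hder.differentiableAt.continuousAt.continuousWithinAt
  · intro x hx
    rw [interior_Ioo] at hx
    obtain ⟨v, hv, hder⟩ := key x hx
    rw [hder.deriv]
    exact hv
end
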